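/- arXiv:quant-ph/0609166 — 4 statements merged into one kernel-verified Lean document; each statement's English description precedes it below -/
import Mathlib

section
/- Let p ≥ 1, let S and T be finite nonempty types, let F_A : Bool → S → ZMod p and F_B : Bool → T → ZMod p, and for each input pair (x, y) : Bool × Bool let μ (x,y) be a probability mass function on S × T whose first marginal is the uniform distribution on S and whose second marginal is the uniform distribution on T. Define p_A x to be the pushforward of the uniform distribution on S under F_A x, and p_B y to be the pushforward of the uniform distribution on T under F_B y. If for every (x, y), every pair (s, t) in the support of μ (x,y) satisfies F_B y t - F_A x s = (if x = true ∧ y = true then 1 else 0) in ZMod p, then: (i) p_A false = p_B false; (ii) p_A false = p_B true; (iii) p_A true = p_B false; and (iv) for every q : ZMod p, (p_A true) q = (p_B true) (q + 1). -/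
private lemma pmf_map_congr {α β : Type*} (μ : PMF α) (f g : α → β)
    (h : ∀ a ∈ μ.support, f a = g a) : μ.map f = μ.map g := by
  ext b
  simp only [PMF.map_apply]
  refine tsum_congr fun a => ?_
  by_cases ha : a ∈ μ.support
  · rw [h a ha]
  · simp only [PMF.mem_support_iff, not_not] at ha
    simp [ha]

private lemma key {p : ℕ} {S T : Type} [Fintype S] [Nonempty S] [Fintype T] [Nonempty T]
    (fA : S → ZMod p) (fB : T → ZMod p) (c : ZMod p)
    (ν : PMF (S × T))
    (hfst : ν.map Prod.fst = PMF.uniformOfFintype S)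
    (hsnd : ν.map Prod.snd = PMF.uniformOfFintype T)
    (h : ∀ st ∈ ν.support, fB st.2 - fA st.1 = c) :
    (PMF.uniformOfFintype S).map fA = ((PMF.uniformOfFintype T).map fB).map (· - c) := by
  rw [← hfst, ← hsnd, PMF.map_comp, PMF.map_comp, PMF.map_comp]
  exact pmf_map_congr ν _ _ (fun st hst => by
    have := h st hst
    simp only [Function.comp_apply]
    rw [← this]; ring)

/-- The four marginal-matching conditions forced by a perfect simulation of the
mod-`p` nonlocal box by boxes with uniform outputs. -/
theorem marginal_conditions_of_perfect_simulation (p : ℕ) (hp : 1 ≤ p)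
    (S T : Type) [Fintype S] [Nonempty S] [Fintype T] [Nonempty T]
    (F_A : Bool → S → ZMod p) (F_B : Bool → T → ZMod p)
    (μ : Bool × Bool → PMF (S × T))
    (hfst : ∀ x y : Bool, (μ (x, y)).map Prod.fst = PMF.uniformOfFintype S)
    (hsnd : ∀ x y : Bool, (μ (x, y)).map Prod.snd = PMF.uniformOfFintype T)
    (hsim : ∀ x y : Bool, ∀ st ∈ (μ (x, y)).support,
      F_B y st.2 - F_A x st.1 = (if x = true ∧ y = true then (1 : ZMod p) else 0)) :
    ((PMF.uniformOfFintype S).map (F_A false) = (PMF.uniformOfFintype T).map (F_B false)) ∧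
    ((PMF.uniformOfFintype S).map (F_A false) = (PMF.uniformOfFintype T).map (F_B true)) ∧
    ((PMF.uniformOfFintype S).map (F_A true) = (PMF.uniformOfFintype T).map (F_B false)) ∧
    (∀ q : ZMod p,
      (PMF.uniformOfFintype S).map (F_A true) q =
        (PMF.uniformOfFintype T).map (F_B true) (q + 1)) := by
  have k := fun x y => key (F_A x) (F_B y) _ (μ (x,y)) (hfst x y) (hsnd x y) (hsim x y)
  have hzero : ∀ (ν : PMF (ZMod p)), ν.map (· - (0 : ZMod p)) = ν := by
    intro ν
    simp only [sub_zero]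
    exact ν.map_id
  refine ⟨?_, ?_, ?_, ?_⟩
  · have := k false false; norm_num at this; rw [this]; exact PMF.map_id _
  · have := k false true; norm_num at this; rw [this]; exact PMF.map_id _
  · have := k true false; norm_num at this; rw [this]; exact PMF.map_id _
  · intro q
    have := k true true
    norm_num at this
    rw [this, PMF.map_apply]
    rw [tsum_eq_single (q + 1) (fun r hr => by
      rw [if_neg]; intro h; apply hr; rw [h]; ring)]
    rw [if_pos (by ring)]
end

section
/- Let p ≥ 1 and let g_A, g_B : Bool → (ZMod p → ℝ≥0) be probability distributions on ZMod p (i.e., for each input the values sum to 1). Suppose g_A false = g_B false, g_A false = g_B true, g_A true = g_B false, and for every q : ZMod p, (g_A true) q = (g_B true) (q + 1). Then g_B true is the uniform distribution on ZMod p, i.e., (g_B true) q = 1/p for every q. -/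
/-- If two families of probability distributions on `ZMod p` satisfy the four
marginal-matching conditions of the mod-`p` nonlocal box, then `g_B true` is
invariant under the shift `q ↦ q + 1`, hence uniform. -/
theorem uniform_of_marginal_conditions (p : ℕ) [NeZero p]
    (g_A g_B : Bool → ZMod p → NNReal)
    (hA : ∀ x : Bool, ∑ q : ZMod p, g_A x q = 1)
    (hB : ∀ y : Bool, ∑ q : ZMod p, g_B y q = 1)
    (h1 : g_A false = g_B false)
    (h2 : g_A false = g_B true)
    (h3 : g_A true = g_B false)
    (h4 : ∀ q : ZMod p, g_A true q = g_B true (q + 1)) :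
    ∀ q : ZMod p, g_B true q = 1 / (p : NNReal) := by
  set f := g_B true with hf
  have hshift : ∀ q : ZMod p, f q = f (q + 1) := by
    intro q
    have : f q = g_A true q := by rw [← h2, h3, h1]
    rw [this, h4 q]
  have hnat : ∀ n : ℕ, f (n : ZMod p) = f 0 := by
    intro n
    induction n with
    | zero => simp
    | succ k ih => rw [← ih]; push_cast; exact (hshift _).symm
  have hconst : ∀ q : ZMod p, f q = f 0 := by
    intro q
    have := hnat q.val
    rwa [ZMod.natCast_val, ZMod.cast_id] at this
  intro q
  rw [hconst q]
  have hsum : ∑ q : ZMod p, f q = 1 := hB true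
  have : (p : NNReal) * f 0 = 1 := by
    rw [← hsum, Finset.sum_congr rfl fun q _ => hconst q]
    rw [Finset.sum_const, Finset.card_univ, ZMod.card, nsmul_eq_mul]
  have hp : (p : NNReal) ≠ 0 := Nat.cast_ne_zero.mpr (NeZero.ne p)
  rw [eq_div_iff hp, mul_comm]
  exact this
end

section
/- There do not exist a natural number N, adaptive strategy functions ξ, η : Bool → (∀ i : Fin N, (∀ j : Fin i, Bool) → Bool), and output functions F_A, F_B : Bool → (Fin N → Bool) → ZMod 3 such that for all x, y : Bool and all a : Fin N → Bool, F_B y b - F_A x a = (if x = true ∧ y = true then 1 else 0) in ZMod 3, where b : Fin N → Bool is defined by the strong recursion b i = xor (a i) ((ξ x i (fun j => a j)) && (η y i (fun j => b j))). (This is Theorem 1: a finite number of standard nonlocal boxes together with shared randomness cannot perfectly simulate the mod-3 nonlocal box, stated in its deterministic form to which the probabilistic case reduces.) -/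
/-- Bob's output string in a deterministic protocol using `N` standard (mod-2)
nonlocal boxes: at step `i`, Alice inputs `ξ i` (of her previous outputs) and
receives `a i`, Bob inputs `η i` (of his previous outputs) and receives `b i`,
with `b i = xor (a i) (Alice's input && Bob's input)`. -/
def protocolB (N : ℕ) (ξ η : ∀ i : Fin N, (∀ _ : Fin i, Bool) → Bool)
    (a : Fin N → Bool) : Fin N → Bool
  | i => xor (a i)
      ((ξ i fun j => a ⟨j.val, j.isLt.trans i.isLt⟩) &&
       (η i fun j => protocolB N ξ η a ⟨j.val, j.isLt.trans i.isLt⟩))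
  termination_by i => i.val

lemma protocolB_injective (N : ℕ) (ξ η : ∀ i : Fin N, (∀ _ : Fin i, Bool) → Bool) :
    Function.Injective (protocolB N ξ η) := by
  intro a a' h
  have key : ∀ n (hn : n < N), a ⟨n, hn⟩ = a' ⟨n, hn⟩ := by
    intro n
    induction n using Nat.strong_induction_on with
    | _ n IH =>
      intro hn
      have h1 := congrFun h ⟨n, hn⟩
      rw [protocolB, protocolB] at h1
      have hξ : (fun j : Fin (⟨n, hn⟩ : Fin N) => a ⟨j.val, j.isLt.trans hn⟩) =
          (fun j : Fin (⟨n, hn⟩ : Fin N) => a' ⟨j.val, j.isLt.trans hn⟩) := by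
        funext j
        exact IH j.val j.isLt _
      have hη : (fun j : Fin (⟨n, hn⟩ : Fin N) => protocolB N ξ η a ⟨j.val, j.isLt.trans hn⟩) =
          (fun j : Fin (⟨n, hn⟩ : Fin N) => protocolB N ξ η a' ⟨j.val, j.isLt.trans hn⟩) := by
        funext j
        exact congrFun h _
      rw [hξ, hη] at h1
      set c := (ξ ⟨n, hn⟩ _ && η ⟨n, hn⟩ _) with hc
      cases c <;> simpa using h1
  funext i
  exact key i.val i.isLt

/-- Theorem 1: a finite number of standard nonlocal boxes together with shared
randomness cannot perfectly simulate the mod-3 nonlocal box (deterministic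
form, to which the probabilistic case reduces). -/
theorem mod2_boxes_cannot_simulate_mod3 :
    ¬ ∃ (N : ℕ)
        (ξ η : Bool → ∀ i : Fin N, (∀ _ : Fin i, Bool) → Bool)
        (F_A F_B : Bool → (Fin N → Bool) → ZMod 3),
        ∀ (x y : Bool) (a : Fin N → Bool),
          F_B y (protocolB N (ξ x) (η y) a) - F_A x a =
            (if x = true ∧ y = true then (1 : ZMod 3) else 0) := by
  rintro ⟨N, ξ, η, F_A, F_B, H⟩
  have hbij : ∀ x y, Function.Bijective (protocolB N (ξ x) (η y)) := fun x y =>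
    Finite.injective_iff_bijective.mp (protocolB_injective N (ξ x) (η y))
  set S : Bool → ZMod 3 := fun y => ∑ b : Fin N → Bool, F_B y b with hS
  set T : Bool → ZMod 3 := fun x => ∑ a : Fin N → Bool, F_A x a with hT
  have hsum : ∀ x y : Bool, S y - T x =
      (2 : ZMod 3) ^ N * (if x = true ∧ y = true then 1 else 0) := by
    intro x y
    have h1 : ∑ a : Fin N → Bool, (F_B y (protocolB N (ξ x) (η y) a) - F_A x a) =
        ∑ a : Fin N → Bool, (if x = true ∧ y = true then (1 : ZMod 3) else 0) := by
      exact Finset.sum_congr rfl fun a _ => H x y a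
    rw [Finset.sum_sub_distrib] at h1
    rw [(hbij x y).sum_comp (F_B y)] at h1
    rw [Finset.sum_const] at h1
    have hcard : (Finset.univ : Finset (Fin N → Bool)).card = 2 ^ N := by
      simp [Finset.card_univ]
    rw [hcard] at h1
    rw [hS, hT]
    simpa [nsmul_eq_mul] using h1
  have e00 := hsum false false
  have e10 := hsum true false
  have e01 := hsum false true
  have e11 := hsum true true
  simp only [if_pos, if_neg, Bool.false_eq_true, false_and, and_false, and_self,
    mul_zero, mul_one, if_true, if_false, reduceIte] at e00 e10 e01 e11
  have hzero : (2 : ZMod 3) ^ N = 0 := by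
    linear_combination e01 + e10 - e00 - e11
  exact absurd hzero (pow_ne_zero N (by decide))
end

section
/- For all natural numbers M, K and all families σ : Fin M → Type and τ : Fin K → Type of finite nonempty types, there exists a prime number p such that there do not exist output functions F_A : Bool → (∀ i, σ i) → ZMod p and F_B : Bool → (∀ i, τ i) → ZMod p and a family μ of probability mass functions on (∀ i, σ i) × (∀ i, τ i) indexed by input pairs (x, y) : Bool × Bool, such that for every (x, y) the first marginal of μ (x,y) is the uniform distribution on (∀ i, σ i), the second marginal is the uniform distribution on (∀ i, τ i), and every pair (s, t) in the support of μ (x,y) satisfies F_B y t - F_A x s = (if x = true ∧ y = true then 1 else 0) in ZMod p. (This is the Corollary: no finite set of finite-output-alphabet nonlocal boxes with uniform outputs is universal, since there are infinitely many primes and hence a prime exceeding all the output alphabet sizes.) -/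
/-- Corollary: no finite set of finite-output-alphabet nonlocal boxes with
uniform outputs is universal: for any finite families of finite nonempty
output alphabets there is a prime `p` such that the mod-`p` nonlocal box
cannot be perfectly simulated. -/
theorem no_finite_uniform_box_set_universal
    (M K : ℕ) (σ : Fin M → Type) (τ : Fin K → Type)
    [∀ i, Fintype (σ i)] [∀ i, Nonempty (σ i)]
    [∀ i, Fintype (τ i)] [∀ i, Nonempty (τ i)] :
    ∃ p : ℕ, p.Prime ∧
      ¬ ∃ (F_A : Bool → (∀ i, σ i) → ZMod p)
          (F_B : Bool → (∀ i, τ i) → ZMod p)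
          (μ : Bool × Bool → PMF ((∀ i, σ i) × (∀ i, τ i))),
          ∀ x y : Bool,
            (μ (x, y)).map Prod.fst = PMF.uniformOfFintype (∀ i, σ i) ∧
            (μ (x, y)).map Prod.snd = PMF.uniformOfFintype (∀ i, τ i) ∧
            ∀ st ∈ (μ (x, y)).support,
              F_B y st.2 - F_A x st.1 = (if x = true ∧ y = true then (1 : ZMod p) else 0) := by
  set S := ∀ i, σ i with hS
  set T := ∀ i, τ i with hT
  obtain ⟨p, hple, hp⟩ := Nat.exists_infinite_primes (Fintype.card S + 1)
  have hcard : Fintype.card S < p := hple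
  refine ⟨p, hp, ?_⟩
  rintro ⟨F_A, F_B, μ, h⟩
  haveI : NeZero p := ⟨hp.pos.ne'⟩
  -- key identity
  have key : ∀ x y : Bool,
      (PMF.uniformOfFintype T).map (F_B y)
        = (PMF.uniformOfFintype S).map
            (fun s => F_A x s + (if x = true ∧ y = true then (1 : ZMod p) else 0)) := by
    intro x y
    obtain ⟨h1, h2, h3⟩ := h x y
    set c : ZMod p := if x = true ∧ y = true then (1 : ZMod p) else 0 with hc
    calc (PMF.uniformOfFintype T).map (F_B y)
        = ((μ (x, y)).map Prod.snd).map (F_B y) := by rw [h2]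
      _ = (μ (x, y)).map (fun st => F_B y st.2) := PMF.map_comp _ _ _
      _ = (μ (x, y)).map (fun st => F_A x st.1 + c) := by
            refine pmf_map_congr _ _ _ fun st hst => ?_
            have := h3 st hst
            rw [← this]; ring
      _ = ((μ (x, y)).map Prod.fst).map (fun a => F_A x a + c) := by
            rw [PMF.map_comp]; rfl
      _ = (PMF.uniformOfFintype S).map (fun s => F_A x s + c) := by rw [h1]
  have e00 := key false false
  have e10 := key true false
  have e01 := key false true
  have e11 := key true true
  simp only [Bool.false_eq_true, and_false, false_and, and_self, if_false, if_true,
    if_neg, add_zero] at e00 e10 e01 e11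
  -- e00 : B0 = map (F_A false), e10 : B0 = map (F_A true),
  -- e01 : B1 = map (F_A false), e11 : B1 = map (fun s => F_A true s + 1)
  set A : PMF (ZMod p) := (PMF.uniformOfFintype S).map (F_A false) with hA
  have hshift : A.map (fun z => z + 1) = A := by
    have h1 : (PMF.uniformOfFintype S).map (fun s => F_A true s + 1)
        = (PMF.uniformOfFintype S).map (F_A false) := by rw [← e11, e01]
    have h2 : (PMF.uniformOfFintype S).map (F_A true)
        = (PMF.uniformOfFintype S).map (F_A false) := by rw [← e10, e00]
    calc A.map (fun z => z + 1)
        = ((PMF.uniformOfFintype S).map (F_A true)).map (fun z => z + 1) := by rw [hA, ← h2]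
      _ = (PMF.uniformOfFintype S).map (fun s => F_A true s + 1) := PMF.map_comp _ _ _
      _ = A := h1
  -- pointwise: A (z) = A (z - 1)
  have hpt : ∀ z : ZMod p, A z = A (z - 1) := by
    intro z
    conv_lhs => rw [← hshift]
    rw [PMF.map_apply]
    rw [tsum_eq_single (z - 1) ?_]
    · rw [if_pos (by ring)]
    · intro a ha
      rw [if_neg]
      intro hz
      exact ha (by rw [hz]; ring)
  have hsucc : ∀ z : ZMod p, A (z + 1) = A z := fun z => by
    have := hpt (z + 1); simpa using this
  have hconst : ∀ z : ZMod p, A z = A 0 := by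
    have hnat : ∀ n : ℕ, A (n : ZMod p) = A 0 := by
      intro n
      induction n with
      | zero => simp
      | succ k ih => rw [Nat.cast_succ, hsucc, ih]
    intro z
    have := hnat z.val
    rwa [ZMod.natCast_rightInverse z] at this
  -- sum up: p * A 0 = 1
  have hsum : (p : ENNReal) * A 0 = 1 := by
    have := A.tsum_coe
    rw [tsum_fintype] at this
    calc (p : ENNReal) * A 0 = ∑ z : ZMod p, A 0 := by
          rw [Finset.sum_const, Finset.card_univ, ZMod.card, nsmul_eq_mul]
      _ = ∑ z : ZMod p, A z := by exact Finset.sum_congr rfl fun z _ => (hconst z).symm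
      _ = 1 := this
  have hA0 : A 0 = (p : ENNReal)⁻¹ := by
    have hne : (p : ENNReal) ≠ 0 := by exact_mod_cast hp.pos.ne'
    have hnt : (p : ENNReal) ≠ ⊤ := ENNReal.natCast_ne_top p
    have this2 : (p : ENNReal)⁻¹ * ((p : ENNReal) * A 0) = (p : ENNReal)⁻¹ * 1 := by
      rw [hsum]
    rw [← mul_assoc, ENNReal.inv_mul_cancel hne hnt, one_mul, mul_one] at this2
    exact this2
  -- A 0 > 0, so there's s with F_A false s = 0
  have h0mem : (0 : ZMod p) ∈ A.support := by
    rw [PMF.mem_support_iff, hA0]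
    simp [hp.pos.ne']
  rw [hA, PMF.support_map] at h0mem
  obtain ⟨s, _, hs⟩ := h0mem
  -- lower bound A 0 ≥ 1 / card S
  have hge : ((Fintype.card S : ENNReal))⁻¹ ≤ A 0 := by
    rw [hA, PMF.map_apply]
    refine le_trans ?_ (ENNReal.le_tsum s)
    rw [if_pos hs.symm, PMF.uniformOfFintype_apply]
  rw [hA0] at hge
  have : (p : ENNReal) ≤ (Fintype.card S : ENNReal) := by
    rw [← ENNReal.inv_le_inv]
    exact hge
  have : p ≤ Fintype.card S := by exact_mod_cast this
  omega
end
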